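/- arXiv:2402.09118 — 4 statements merged into one kernel-verified Lean document; each statement's English description precedes it below -/
import Mathlib

section
/- Let (K,S) be a measurable space and f,g : K → [0,∞)×[0,∞) measurable in the lexicographic sense. Then f+g (with the lexicographic-max addition) is measurable. -/
open MeasureTheory
open scoped NNReal ENNReal

noncomputable section

abbrev Hv : Type := ℝ≥0 × ℝ≥0∞
abbrev Fv : Type := ℝ≥0 × ℝ≥0

/-- Lexicographic order `≤` on `[0,∞)×[0,∞]`. -/
def hle (x y : Hv) : Prop := x.1 < y.1 ∨ (x.1 = y.1 ∧ x.2 ≤ y.2)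
/-- Lexicographic order `<` on `[0,∞)×[0,∞]`. -/
def hlt (x y : Hv) : Prop := x.1 < y.1 ∨ (x.1 = y.1 ∧ x.2 < y.2)
/-- Lexicographic-max addition. -/
def hadd (x y : Hv) : Hv := if x.1 < y.1 then y else if y.1 < x.1 then x else (x.1, x.2 + y.2)
/-- Multiplication: `(0,0)` if either factor is `(0,0)`, else `(d1+d2, m1*m2)`. -/
def hmul (x y : Hv) : Hv := if x = (0,0) ∨ y = (0,0) then (0,0) else (x.1 + y.1, x.2 * y.2)

def flt (x y : Fv) : Prop := x.1 < y.1 ∨ (x.1 = y.1 ∧ x.2 < y.2)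
def fle (x y : Fv) : Prop := x.1 < y.1 ∨ (x.1 = y.1 ∧ x.2 ≤ y.2)
def emb (x : Fv) : Hv := (x.1, (x.2 : ℝ≥0∞))

/-- `f : K → [0,∞)×[0,∞)` is measurable iff `{x | f x < (d,m)} ∈ S` for all `(d,m)`. -/
def HMeas {K : Type*} [MeasurableSpace K] (f : K → Fv) : Prop :=
  ∀ d m : ℝ≥0, MeasurableSet {x | flt (f x) (d, m)}

/-- Infinite sum in `[0,∞)×[0,∞]`: `(D, ∑_{d_j = D} m_j)` where `D = sup d_i`. -/
def hSum (a : ℕ → Hv) : Hv :=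
  (⨆ i, (a i).1, ∑' i, if (a i).1 = ⨆ j, (a j).1 then (a i).2 else 0)

/-- Finite sum (iterated lexicographic-max addition). -/
def hFinsum {n : ℕ} (v : Fin n → Hv) : Hv :=
  (⨆ i, (v i).1, ∑ i, if (v i).1 = ⨆ j, (v j).1 then (v i).2 else 0)

/-- `μ` is an h-measure: `μ ∅ = (0,0)` and countable additivity. -/
def IsHMeasure {K : Type*} [MeasurableSpace K] (μ : Set K → Hv) : Prop :=
  μ ∅ = (0, 0) ∧
  ∀ A : ℕ → Set K, (∀ n, MeasurableSet (A n)) → Pairwise (Function.onFun Disjoint A) →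
    μ (⋃ n, A n) = hSum fun n => μ (A n)

/-- The set of integrals of measurable simple functions `(0,0) ≤ g ≤ f`. -/
def hIntSet {K : Type*} [MeasurableSpace K] (μ : Set K → Hv) (f : K → Fv) : Set Hv :=
  { v | ∃ (n : ℕ) (c : Fin n → Fv) (A : Fin n → Set K),
      (∀ i, MeasurableSet (A i)) ∧ Pairwise (Function.onFun Disjoint A) ∧
      (∀ i, ∀ x ∈ A i, fle (c i) (f x)) ∧
      v = hFinsum fun i => hmul (emb (c i)) (μ (A i)) }

/-- `v` is the least upper bound (w.r.t. `hle`) of `s`; `(H)∫ f dμ = v` means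
`IsHLub (hIntSet μ f) v`. -/
def IsHLub (s : Set Hv) (v : Hv) : Prop :=
  (∀ w ∈ s, hle w v) ∧ ∀ u, (∀ w ∈ s, hle w u) → hle v u

end

/-- Lexicographic-max addition on `[0,∞)×[0,∞)`. -/
noncomputable def fadd (x y : Fv) : Fv :=
  if x.1 < y.1 then y else if y.1 < x.1 then x else (x.1, x.2 + y.2)

/- Proof idea: `fadd a b` has first coordinate `max a.1 b.1 =: D` and second coordinate
`w_D a + w_D b`, where `w_D = lexWeight D` keeps `a.2` if `a.1 = D` and is `0` otherwise. Hence
`fadd (f x) (g x) < (d, m)` iff either `max (f x).1 (g x).1 < d`, or this maximum equals `d` and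
`w_d (f x) + w_d (g x) < m`. Both `x ↦ (f x).1` and `x ↦ w_d (f x)` are measurable `ℝ≥0`-valued
functions for a lexicographically measurable `f`, so the usual closure properties conclude. -/

noncomputable def lexWeight (d : ℝ≥0) (a : Fv) : ℝ≥0 := if a.1 = d then a.2 else 0

lemma fadd_fst (a b : Fv) : (fadd a b).1 = max a.1 b.1 := by
  unfold fadd
  split_ifs with hab hba
  · exact (max_eq_right hab.le).symm
  · exact (max_eq_left hba.le).symm
  · exact (max_eq_left (not_lt.mp hab)).symm

lemma fadd_snd (a b : Fv) :
    (fadd a b).2 = lexWeight (max a.1 b.1) a + lexWeight (max a.1 b.1) b := by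
  unfold fadd lexWeight
  rcases lt_trichotomy a.1 b.1 with hab | hab | hab
  · simp [hab, hab.ne, hab.le]
  · simp [hab]
  · simp [hab, hab.ne, hab.le, not_lt.mpr hab.le]

lemma flt_fadd_iff (a b : Fv) (d m : ℝ≥0) :
    flt (fadd a b) (d, m) ↔
      max a.1 b.1 < d ∨ max a.1 b.1 = d ∧ lexWeight d a + lexWeight d b < m := by
  simp only [flt, fadd_fst, fadd_snd]
  constructor
  · rintro (h | ⟨h, hm⟩)
    · exact Or.inl h
    · exact Or.inr ⟨h, h ▸ hm⟩
  · rintro (h | ⟨rfl, hm⟩)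
    · exact Or.inl h
    · exact Or.inr ⟨rfl, hm⟩

namespace HMeas

variable {K : Type*} [MeasurableSpace K] {f : K → Fv}

lemma measurable_fst (hf : HMeas f) : Measurable fun x => (f x).1 := by
  refine measurable_of_Iio fun d => ?_
  convert hf d 0 using 1
  ext x
  simp [flt]

lemma measurable_lexWeight (hf : HMeas f) (d : ℝ≥0) :
    Measurable fun x => lexWeight d (f x) := by
  refine measurable_of_Iio fun m => ?_
  have hset : (fun x => lexWeight d (f x)) ⁻¹' Set.Iio m =
      ({x | (f x).1 = d}ᶜ ∩ {_x | 0 < m}) ∪ ({x | flt (f x) (d, m)} \ {x | (f x).1 < d}) := by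
    ext x
    by_cases hx : (f x).1 = d <;> simp [lexWeight, flt, hx]
  rw [hset]
  have hfst := hf.measurable_fst
  exact ((measurableSet_eq_fun hfst measurable_const).compl.inter (MeasurableSet.const _)).union
    ((hf d m).diff (measurableSet_lt hfst measurable_const))

end HMeas

/-- The sum of two measurable functions is measurable. -/
theorem add_measurable {K : Type*} [MeasurableSpace K] (f g : K → Fv)
    (hf : HMeas f) (hg : HMeas g) : HMeas fun x => fadd (f x) (g x) := by
  intro d m
  simp only [flt_fadd_iff]
  rw [Set.ofPred_or, Set.ofPred_and]
  have hmax : Measurable fun x => max (f x).1 (g x).1 := hf.measurable_fst.max hg.measurable_fst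
  have hsum : Measurable fun x => lexWeight d (f x) + lexWeight d (g x) :=
    (hf.measurable_lexWeight d).add (hg.measurable_lexWeight d)
  exact (measurableSet_lt hmax measurable_const).union
    ((measurableSet_eq_fun hmax measurable_const).inter (measurableSet_lt hsum measurable_const))
end

section
/- Let (K,S) be a measurable space and f_n : K → [0,∞)×[0,∞) measurable (lexicographic sense) for each n ∈ ℕ, with f_n → f pointwise in the order topology on [0,∞)×[0,+∞]. Then f is measurable. -/
open MeasureTheory
open scoped NNReal ENNReal

section Aux

open scoped NNReal ENNReal

lemma emb_lt_iff (p q : Fv) : toLex (emb p) < toLex (emb q) ↔ flt p q := by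
  rw [Prod.Lex.lt_iff]
  simp [emb, flt, ENNReal.coe_lt_coe]

lemma emb_le_iff (p q : Fv) : toLex (emb p) ≤ toLex (emb q) ↔ fle p q := by
  rw [Prod.Lex.le_iff]
  simp [emb, fle, ENNReal.coe_le_coe]

lemma fle_flt_trans {p b c : Fv} (h1 : fle p b) (h2 : flt b c) : flt p c := by
  rcases h1 with h1 | ⟨h1, h1'⟩ <;> rcases h2 with h2 | ⟨h2, h2'⟩
  · exact Or.inl (h1.trans h2)
  · exact Or.inl (h2 ▸ h1)
  · exact Or.inl (h1 ▸ h2)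
  · exact Or.inr ⟨h1.trans h2, lt_of_le_of_lt h1' h2'⟩

lemma fle_iff_forall (F : Fv) (a s : ℝ≥0) :
    fle F (a, s) ↔ ∀ k : ℕ, flt F (a, s + ((k : ℝ≥0) + 1)⁻¹) := by
  constructor
  · intro h k
    rcases h with h | ⟨h, h'⟩
    · exact Or.inl h
    · exact Or.inr ⟨h, lt_of_le_of_lt h' (lt_add_of_pos_right _ (by positivity))⟩
  · intro h
    by_cases hfa : F.1 < a
    · exact Or.inl hfa
    have h0 := h 0
    rcases h0 with h0 | ⟨h0, _⟩
    · exact Or.inl h0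
    refine Or.inr ⟨h0, ?_⟩
    have h2 : ∀ k : ℕ, F.2 < s + ((k : ℝ≥0) + 1)⁻¹ := by
      intro k
      rcases h k with hk | ⟨_, hk⟩
      · exact absurd hk hfa
      · exact hk
    refine le_of_forall_pos_le_add fun ε hε => ?_
    obtain ⟨k, hk⟩ := exists_nat_gt ε⁻¹
    have hk2 : ((k : ℝ≥0) + 1)⁻¹ < ε := by
      rw [inv_lt_comm₀ (by positivity) hε]
      exact hk.trans (lt_add_one _)
    exact le_trans (h2 k).le (by gcongr)

lemma eventuallySet_measurable {K : Type*} [MeasurableSpace K]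
    (S : ℕ → Set K) (hS : ∀ n, MeasurableSet (S n)) :
    MeasurableSet {x | ∀ᶠ n in Filter.atTop, x ∈ S n} := by
  have : {x | ∀ᶠ n in Filter.atTop, x ∈ S n}
      = ⋃ N, ⋂ n, ⋂ (_ : N ≤ n), S n := by
    ext x
    simp [Filter.eventually_atTop]
  rw [this]
  exact MeasurableSet.iUnion fun N => MeasurableSet.iInter fun n =>
    MeasurableSet.iInter fun _ => hS n

lemma meas_fle {K : Type*} [MeasurableSpace K] {f : K → Fv} (hf : HMeas f) (a s : ℝ≥0) :
    MeasurableSet {x | fle (f x) (a, s)} := by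
  have : {x | fle (f x) (a, s)}
      = ⋂ k : ℕ, {x | flt (f x) (a, s + ((k : ℝ≥0) + 1)⁻¹)} := by
    ext x
    simpa using fle_iff_forall (f x) a s
  rw [this]
  exact MeasurableSet.iInter fun k => hf _ _

end Aux

/-- The order topology of the lexicographic order on `[0,∞)×[0,∞]`. -/
noncomputable def hTop : TopologicalSpace (ℝ≥0 ×ₗ ℝ≥0∞) := Preorder.topology _

/-- A pointwise limit (in the order topology) of measurable functions is measurable. -/
theorem limit_measurable {K : Type*} [MeasurableSpace K] (f : ℕ → K → Fv) (g : K → Fv)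
    (hf : ∀ n, HMeas (f n))
    (hconv : ∀ x, Filter.Tendsto (fun n => toLex (emb (f n x))) Filter.atTop
        (@nhds _ hTop (toLex (emb (g x))))) :
    HMeas g := by
  letI : TopologicalSpace (ℝ≥0 ×ₗ ℝ≥0∞) := hTop
  haveI : OrderTopology (ℝ≥0 ×ₗ ℝ≥0∞) := ⟨rfl⟩
  intro d m
  have key : {x | flt (g x) (d, m)} =
      (⋃ q : ℚ, ⋃ (_ : Real.toNNReal q < d),
        {x | ∀ᶠ n in Filter.atTop, x ∈ {y | fle (f n y) (Real.toNNReal q, 0)}}) ∪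
      (⋃ r : ℚ, ⋃ (_ : Real.toNNReal r < m),
        {x | ∀ᶠ n in Filter.atTop, x ∈ {y | fle (f n y) (d, Real.toNNReal r)}}) := by
    ext x
    simp only [Set.mem_setOf_eq, Set.mem_union, Set.mem_iUnion]
    constructor
    · rintro (h1 | ⟨h1, h2⟩)
      · obtain ⟨q, -, hq1, hq2⟩ := (NNReal.lt_iff_exists_rat_btwn _ _).1 h1
        refine Or.inl ⟨q, hq2, ?_⟩
        have hgx : toLex (emb (g x)) < toLex (emb (Real.toNNReal q, 0)) :=
          (emb_lt_iff _ _).2 (Or.inl hq1)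
        have := (tendsto_order.1 (hconv x)).2 _ hgx
        exact this.mono fun n hn => ((emb_lt_iff _ _).1 hn).elim Or.inl
          (fun h => Or.inr ⟨h.1, h.2.le⟩)
      · obtain ⟨r, -, hr1, hr2⟩ := (NNReal.lt_iff_exists_rat_btwn _ _).1 h2
        refine Or.inr ⟨r, hr2, ?_⟩
        have hgx : toLex (emb (g x)) < toLex (emb (d, Real.toNNReal r)) :=
          (emb_lt_iff _ _).2 (Or.inr ⟨h1, hr1⟩)
        have := (tendsto_order.1 (hconv x)).2 _ hgx
        exact this.mono fun n hn => ((emb_lt_iff _ _).1 hn).elim Or.inl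
          (fun h => Or.inr ⟨h.1, h.2.le⟩)
    · have limle : ∀ b : Fv, (∀ᶠ n in Filter.atTop, fle (f n x) b) → fle (g x) b := by
        intro b hb
        have hmem : ∀ᶠ n in Filter.atTop,
            (fun n => toLex (emb (f n x))) n ∈ Set.Iic (toLex (emb b)) :=
          hb.mono fun n hn => (emb_le_iff _ _).2 hn
        have : toLex (emb (g x)) ∈ Set.Iic (toLex (emb b)) :=
          isClosed_Iic.mem_of_frequently_of_tendsto hmem.frequently (hconv x)
        exact (emb_le_iff _ _).1 this
      rintro (⟨q, hq, hev⟩ | ⟨r, hr, hev⟩)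
      · exact fle_flt_trans (limle _ hev) (Or.inl hq)
      · exact fle_flt_trans (limle _ hev) (Or.inr ⟨rfl, hr⟩)
  rw [key]
  refine MeasurableSet.union ?_ ?_
  · exact MeasurableSet.iUnion fun q => MeasurableSet.iUnion fun _ =>
      eventuallySet_measurable _ fun n => meas_fle (hf n) _ _
  · exact MeasurableSet.iUnion fun r => MeasurableSet.iUnion fun _ =>
      eventuallySet_measurable _ fun n => meas_fle (hf n) _ _
end

section
/- Let (K,S,μ) be an h-measure space and f : K → [0,∞)×[0,∞) a measurable function. Then (H)∫_K f dμ = (0,0) if and only if f = (0,0) μ-almost everywhere (i.e. μ({x : f(x) > (0,0)}) = (0,0)). -/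
open MeasureTheory
open scoped NNReal ENNReal

/-!
Write `Z = {f > (0,0)}`. Measurable subsets of a null set are null (additivity on `A ⊔ (Z \ A)`),
so if `μ Z = (0,0)`, each term `c_i μ(A_i)` of a simple function below `f` vanishes: either
`c_i = (0,0)` or `A_i ⊆ Z`. Conversely `Z` is the union of the measurable sets
`B_n = {f ≥ (0, 1/(n+1))}`; since `(0, 1/(n+1)) χ_{B_n} ≤ f`, a zero integral forces
`μ B_n = (0,0)`, and a countable union of null sets is null (disjointify, then use countable
additivity).
-/

lemma hle_zero_iff {w : Hv} : hle w (0, 0) ↔ w = (0, 0) := by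
  refine ⟨fun h => ?_, fun h => h ▸ Or.inr ⟨rfl, le_rfl⟩⟩
  rcases h with h | ⟨h1, h2⟩
  · exact (not_lt_zero h).elim
  · exact Prod.ext h1 (nonpos_iff_eq_zero.mp h2)

lemma hmul_eq_zero_iff {x y : Hv} : hmul x y = (0, 0) ↔ x = (0, 0) ∨ y = (0, 0) := by
  refine ⟨fun h => ?_, fun h => if_pos h⟩
  by_contra hxy
  rw [hmul, if_neg hxy, Prod.mk.injEq, add_eq_zero, mul_eq_zero] at h
  obtain ⟨⟨hx1, hy1⟩, hx2 | hy2⟩ := h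
  · exact hxy (Or.inl (Prod.ext hx1 hx2))
  · exact hxy (Or.inr (Prod.ext hy1 hy2))

lemma hSum_zero : hSum (fun _ => ((0, 0) : Hv)) = (0, 0) := by
  simp [hSum]

-- Boundedness is needed: an unbounded `⨆` in `ℝ≥0` is the junk value `0`.
lemma eq_zero_of_hSum_eq_zero {a : ℕ → Hv} (hbdd : BddAbove (Set.range fun n => (a n).1))
    (h : hSum a = (0, 0)) (n : ℕ) : a n = (0, 0) := by
  have hsup : ⨆ j, (a j).1 = 0 := congrArg Prod.fst h
  have hn1 : (a n).1 = 0 := nonpos_iff_eq_zero.mp (hsup ▸ le_ciSup hbdd n)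
  have hn2 := ENNReal.tsum_eq_zero.mp (congrArg Prod.snd h) n
  rw [if_pos (hn1.trans hsup.symm)] at hn2
  exact Prod.ext hn1 hn2

lemma hFinsum_zero (n : ℕ) : hFinsum (fun _ : Fin n => ((0, 0) : Hv)) = (0, 0) := by
  simp [hFinsum]

lemma hFinsum_unique (v : Hv) : hFinsum (fun _ : Fin 1 => v) = v := by
  simp [hFinsum]

lemma fle_of_not_flt {x y : Fv} (h : ¬ flt y x) : fle x y := by
  simp only [flt, not_or, not_and, not_lt] at h
  rcases h.1.lt_or_eq with hlt | heq
  · exact Or.inl hlt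
  · exact Or.inr ⟨heq, h.2 heq.symm⟩

lemma flt_of_flt_of_fle {x y z : Fv} (hxy : flt x y) (hyz : fle y z) : flt x z := by
  rcases hxy with h | ⟨h1, h2⟩ <;> rcases hyz with h' | ⟨h1', h2'⟩
  · exact Or.inl (h.trans h')
  · exact Or.inl (h1' ▸ h)
  · exact Or.inl (h1 ▸ h')
  · exact Or.inr ⟨h1.trans h1', h2.trans_le h2'⟩

lemma zero_flt_of_ne_zero {y : Fv} (h : y ≠ (0, 0)) : flt (0, 0) y := by
  rcases (zero_le : 0 ≤ y.1).lt_or_eq with h1 | h1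
  · exact Or.inl h1
  · refine Or.inr ⟨h1, (zero_le : 0 ≤ y.2).lt_of_ne fun h2 => h (Prod.ext h1.symm h2.symm)⟩

lemma zero_flt_iff_exists_nat {y : Fv} :
    flt (0, 0) y ↔ ∃ n : ℕ, ¬ flt y (0, ((n : ℝ≥0) + 1)⁻¹) := by
  constructor
  · rintro (h | ⟨h1, h2⟩)
    · exact ⟨0, by rintro (h' | ⟨h', -⟩) <;> simp_all⟩
    · obtain ⟨n, hn⟩ := exists_nat_one_div_lt h2
      refine ⟨n, ?_⟩
      rintro (h' | ⟨-, h'⟩)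
      · exact not_lt_zero h'
      · exact (one_div ((n : ℝ≥0) + 1) ▸ hn).not_gt h'
  · rintro ⟨n, hn⟩
    exact flt_of_flt_of_fle (y := (0, ((n : ℝ≥0) + 1)⁻¹)) (Or.inr ⟨rfl, by positivity⟩)
      (fle_of_not_flt hn)

namespace IsHMeasure

variable {K : Type*} [MeasurableSpace K] {μ : Set K → Hv}

lemma measure_eq_zero_of_subset (hμ : IsHMeasure μ) {A Z : Set K} (hA : MeasurableSet A)
    (hZ : MeasurableSet Z) (hAZ : A ⊆ Z) (hZ0 : μ Z = (0, 0)) : μ A = (0, 0) := by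
  let s : ℕ → Set K
    | 0 => A
    | 1 => Z \ A
    | _ => ∅
  have hs : ∀ n, MeasurableSet (s n)
    | 0 => hA
    | 1 => hZ.diff hA
    | _ + 2 => MeasurableSet.empty
  have hdisj : Pairwise (Function.onFun Disjoint s) := by
    intro i j hij
    rcases i with _ | _ | i <;> rcases j with _ | _ | j <;>
      simp_all [s, Function.onFun, Set.disjoint_sdiff_right, Set.disjoint_sdiff_left]
  have hunion : ⋃ n, s n = Z := by
    refine subset_antisymm (Set.iUnion_subset fun n => ?_) fun x hx => ?_
    · rcases n with _ | _ | n
      exacts [hAZ, Set.sdiff_subset, Set.empty_subset _]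
    · by_cases hxA : x ∈ A
      exacts [Set.mem_iUnion.2 ⟨0, hxA⟩, Set.mem_iUnion.2 ⟨1, hx, hxA⟩]
  have hbdd : BddAbove (Set.range fun n => (μ (s n)).1) := by
    refine ⟨(μ A).1 + (μ (Z \ A)).1, ?_⟩
    rintro _ ⟨n, rfl⟩
    rcases n with _ | _ | n <;> simp [s, hμ.1]
  have hsum := hμ.2 s hs hdisj
  rw [hunion, hZ0] at hsum
  exact eq_zero_of_hSum_eq_zero hbdd hsum.symm 0

lemma measure_iUnion_eq_zero (hμ : IsHMeasure μ) {B : ℕ → Set K}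
    (hB : ∀ n, MeasurableSet (B n)) (hB0 : ∀ n, μ (B n) = (0, 0)) :
    μ (⋃ n, B n) = (0, 0) := by
  have hD0 (n : ℕ) : μ (disjointed B n) = (0, 0) :=
    hμ.measure_eq_zero_of_subset (.disjointed hB n) (hB n) (disjointed_subset B n) (hB0 n)
  rw [← iUnion_disjointed, hμ.2 _ (.disjointed hB) (disjoint_disjointed B)]
  simp only [hD0]
  exact hSum_zero

end IsHMeasure

section hIntSet

variable {K : Type*} [MeasurableSpace K] {μ : Set K → Hv} {f : K → Fv}

lemma hmul_mem_hIntSet {c : Fv} {A : Set K} (hA : MeasurableSet A)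
    (hc : ∀ x ∈ A, fle c (f x)) : hmul (emb c) (μ A) ∈ hIntSet μ f :=
  ⟨1, fun _ => c, fun _ => A, fun _ => hA, Subsingleton.pairwise, fun _ => hc,
    (hFinsum_unique _).symm⟩

lemma eq_zero_of_mem_hIntSet (hμ : IsHMeasure μ) (hZ : MeasurableSet {x | flt (0, 0) (f x)})
    (hZ0 : μ {x | flt (0, 0) (f x)} = (0, 0)) {w : Hv} (hw : w ∈ hIntSet μ f) :
    w = (0, 0) := by
  obtain ⟨n, c, A, hA, -, hcf, rfl⟩ := hw
  have hterm (i : Fin n) : hmul (emb (c i)) (μ (A i)) = (0, 0) := by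
    refine hmul_eq_zero_iff.mpr ((em (c i = (0, 0))).imp (fun hci => by simp [emb, hci]) ?_)
    intro hci
    exact hμ.measure_eq_zero_of_subset (hA i) hZ
      (fun x hx => flt_of_flt_of_fle (zero_flt_of_ne_zero hci) (hcf i x hx)) hZ0
  simp only [hterm]
  exact hFinsum_zero n

end hIntSet

/-- `(H)∫_K f dμ = (0,0)` iff `f = (0,0)` μ-almost everywhere. -/
theorem hint_eq_zero_iff {K : Type*} [MeasurableSpace K] (μ : Set K → Hv)
    (hμ : IsHMeasure μ) (f : K → Fv) (hf : HMeas f) (I : Hv)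
    (hI : IsHLub (hIntSet μ f) I) :
    I = (0, 0) ↔ μ {x | flt (0, 0) (f x)} = (0, 0) := by
  set B : ℕ → Set K := fun n => {x | flt (f x) (0, ((n : ℝ≥0) + 1)⁻¹)}ᶜ
  have hB (n : ℕ) : MeasurableSet (B n) := (hf 0 _).compl
  have hZ : {x | flt (0, 0) (f x)} = ⋃ n, B n := by
    ext x
    simp [B, zero_flt_iff_exists_nat]
  constructor
  · intro hI0
    rw [hZ]
    refine hμ.measure_iUnion_eq_zero hB fun n => ?_
    have hle := hI.1 _ (hmul_mem_hIntSet (μ := μ) (hB n) fun x hx => fle_of_not_flt hx)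
    rw [hI0, hle_zero_iff, hmul_eq_zero_iff] at hle
    refine hle.resolve_left fun h => ?_
    simpa [emb] using congrArg Prod.snd h
  · intro hZ0
    refine hle_zero_iff.mp (hI.2 _ fun w hw => hle_zero_iff.mpr ?_)
    exact eq_zero_of_mem_hIntSet hμ (hZ ▸ .iUnion hB) hZ0 hw
end

section
/- Let (K,S,μ) be an h-measure space and f : K → [0,∞)×[0,∞) a measurable function. Then ν(L) := (H)∫_L f dμ for L ∈ S defines an h-measure on S (i.e., ν(∅)=(0,0) and ν is countably additive with respect to the lexicographic-max addition). -/
open MeasureTheory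
open scoped NNReal ENNReal Classical

section auxlemmas
open Set

lemma hle_refl (x : Hv) : hle x x := Or.inr ⟨rfl, le_rfl⟩

lemma hle_zero (x : Hv) : hle ((0,0) : Hv) x := by
  rcases eq_or_lt_of_le (zero_le : 0 ≤ x.1) with h | h
  · exact Or.inr ⟨h, zero_le⟩
  · exact Or.inl h

lemma hle_trans {x y z : Hv} (h1 : hle x y) (h2 : hle y z) : hle x z := by
  unfold hle at *
  rcases h1 with h1 | ⟨e1, l1⟩ <;> rcases h2 with h2 | ⟨e2, l2⟩
  · exact Or.inl (h1.trans h2)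
  · exact Or.inl (e2 ▸ h1)
  · exact Or.inl (e1 ▸ h2)
  · exact Or.inr ⟨e1.trans e2, l1.trans l2⟩

lemma hle_antisymm {x y : Hv} (h1 : hle x y) (h2 : hle y x) : x = y := by
  unfold hle at *
  rcases h1 with h1 | ⟨e1, l1⟩ <;> rcases h2 with h2 | ⟨e2, l2⟩
  · exact absurd (h1.trans h2) (lt_irrefl _)
  · exact absurd h1 (e2 ▸ lt_irrefl _)
  · exact absurd h2 (e1 ▸ lt_irrefl _)
  · exact Prod.ext e1 (le_antisymm l1 l2)

lemma hle_fst {x y : Hv} (h : hle x y) : x.1 ≤ y.1 := by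
  rcases h with h | ⟨e, _⟩
  · exact h.le
  · exact e.le

lemma hle_snd {x y : Hv} (h : hle x y) (he : x.1 = y.1) : x.2 ≤ y.2 := by
  rcases h with h | ⟨_, l⟩
  · exact absurd h (he ▸ lt_irrefl _)
  · exact l

lemma hlt_of_not_hle {x y : Hv} (h : ¬ hle x y) : hlt y x := by
  unfold hle at h; push_neg at h
  obtain ⟨h1, h2⟩ := h
  rcases eq_or_lt_of_le h1 with e | l
  · exact Or.inr ⟨e, h2 e.symm⟩
  · exact Or.inl l

lemma not_hle_of_hlt {x y : Hv} (h : hlt x y) : ¬ hle y x := by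
  unfold hlt at h; unfold hle
  push_neg
  rcases h with h | ⟨e, l⟩
  · exact ⟨h.le, fun e' => absurd e' (ne_of_gt h)⟩
  · exact ⟨e.symm.ge, fun _ => l⟩

lemma fle_zero {x : Fv} (h : fle x (0,0)) : x = (0,0) := by
  rcases h with h | ⟨e, l⟩
  · exact absurd h (by simp)
  · exact Prod.ext e (le_antisymm l (zero_le))

lemma fle_zero_left (y : Fv) : fle ((0,0) : Fv) y := by
  rcases eq_or_lt_of_le (zero_le : 0 ≤ y.1) with h | h
  · exact Or.inr ⟨h, zero_le⟩
  · exact Or.inl h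

lemma emb_zero : emb ((0,0) : Fv) = ((0,0) : Hv) := by simp [emb]

lemma hmul_zero_left (y : Hv) : hmul ((0,0) : Hv) y = (0,0) := if_pos (Or.inl rfl)

lemma hmul_zero_right (x : Hv) : hmul x ((0,0) : Hv) = (0,0) := if_pos (Or.inr rfl)

lemma hmul_pos {x y : Hv} (hx : x ≠ (0,0)) (hy : y ≠ (0,0)) :
    hmul x y = (x.1 + y.1, x.2 * y.2) := if_neg (by tauto)

lemma hFinsum_zero_s17 {n : ℕ} {v : Fin n → Hv} (h : ∀ i, v i = (0,0)) :
    hFinsum v = ((0,0) : Hv) := by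
  unfold hFinsum
  rcases isEmpty_or_nonempty (Fin n) with he | hne
  · simp [ciSup_of_empty]
  · simp [h, ciSup_const]

lemma hSum_zero_s17 {w : ℕ → Hv} (h : ∀ m, w m = (0,0)) : hSum w = ((0,0) : Hv) := by
  unfold hSum
  simp [h, ciSup_const]

lemma hSum_ne_zero {w : ℕ → Hv} (hb : BddAbove (Set.range fun m => (w m).1)) {m : ℕ}
    (h : w m ≠ (0,0)) : hSum w ≠ ((0,0) : Hv) := by
  intro h0
  unfold hSum at h0
  rw [Prod.ext_iff] at h0
  obtain ⟨h1, h2⟩ := h0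
  simp only at h1 h2
  have hm1 : (w m).1 = 0 := le_antisymm (le_of_le_of_eq (le_ciSup hb m) h1) (zero_le)
  have hm2 : (w m).2 = 0 := by
    have hterm : (if (w m).1 = ⨆ j, (w j).1 then (w m).2 else 0) = (w m).2 := by
      rw [if_pos (by rw [hm1, h1])]
    have := ENNReal.le_tsum (f := fun i => if (w i).1 = ⨆ j, (w j).1 then (w i).2 else 0) m
    rw [hterm] at this
    exact le_antisymm (le_of_le_of_eq this h2) (zero_le)
  exact h (Prod.ext hm1 hm2)
end auxlemmas

section auxlemmas2
open Set

lemma hFinsum_fst {n : ℕ} (v : Fin n → Hv) : (hFinsum v).1 = ⨆ i, (v i).1 := rfl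
lemma hSum_fst (a : ℕ → Hv) : (hSum a).1 = ⨆ i, (a i).1 := rfl

lemma bdd_fin {n : ℕ} (f : Fin n → ℝ≥0) : BddAbove (Set.range f) :=
  (Set.finite_range f).bddAbove

lemma le_fin_sup {n : ℕ} (f : Fin n → ℝ≥0) (j : Fin n) : f j ≤ ⨆ i, f i :=
  le_ciSup (bdd_fin f) j

lemma hFinsum_append {m n : ℕ} (v : Fin m → Hv) (w : Fin n → Hv) :
    hFinsum (Fin.append v w) = hadd (hFinsum v) (hFinsum w) := by
  have hsup : (⨆ i, (Fin.append v w i).1) = max (⨆ i, (v i).1) (⨆ i, (w i).1) := by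
    apply le_antisymm
    · rcases isEmpty_or_nonempty (Fin (m + n)) with he | hne
      · rw [ciSup_of_empty]; exact zero_le
      · apply ciSup_le
        intro i
        induction i using Fin.addCases with
        | left j => rw [Fin.append_left]; exact le_max_of_le_left (le_fin_sup (fun i => (v i).1) j)
        | right j => rw [Fin.append_right]; exact le_max_of_le_right (le_fin_sup (fun i => (w i).1) j)
    · apply max_le
      · rcases isEmpty_or_nonempty (Fin m) with he | hne
        · rw [ciSup_of_empty]; exact zero_le
        · apply ciSup_le; intro j
          rw [← Fin.append_left v w j]; exact le_fin_sup (fun i => (Fin.append v w i).1) (Fin.castAdd n j)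
      · rcases isEmpty_or_nonempty (Fin n) with he | hne
        · rw [ciSup_of_empty]; exact zero_le
        · apply ciSup_le; intro j
          rw [← Fin.append_right v w j]; exact le_fin_sup (fun i => (Fin.append v w i).1) (Fin.natAdd m j)
  have hsum : ∀ (c : ℝ≥0), (∑ i, if (Fin.append v w i).1 = c then (Fin.append v w i).2 else 0)
      = (∑ i, if (v i).1 = c then (v i).2 else 0) + (∑ i, if (w i).1 = c then (w i).2 else 0) := by
    intro c
    rw [Fin.sum_univ_add]
    simp only [Fin.append_left, Fin.append_right]
  unfold hadd hFinsum
  rcases lt_trichotomy (⨆ i, (v i).1) (⨆ i, (w i).1) with hlt' | heq | hgt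
  · rw [if_pos hlt']
    have h2 : max (⨆ i, (v i).1) (⨆ i, (w i).1) = ⨆ i, (w i).1 := max_eq_right hlt'.le
    refine Prod.ext (by simp only []; rw [hsup, h2]) ?_
    simp only []
    rw [hsup, h2, hsum]
    have : (∑ i, if (v i).1 = ⨆ i, (w i).1 then (v i).2 else 0) = 0 := by
      apply Finset.sum_eq_zero; intro i _
      rw [if_neg]
      intro hc
      exact absurd (lt_of_le_of_lt (hc ▸ le_fin_sup (fun i => (v i).1) i) hlt') (lt_irrefl _)
    rw [this, zero_add]
  · rw [if_neg (by rw [heq]; exact lt_irrefl _), if_neg (by rw [heq]; exact lt_irrefl _)]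
    have h2 : max (⨆ i, (v i).1) (⨆ i, (w i).1) = ⨆ i, (v i).1 := max_eq_left heq.ge
    refine Prod.ext (by simp only []; rw [hsup, h2]) ?_
    simp only []
    rw [hsup, h2, hsum, heq]
  · rw [if_neg (not_lt_of_gt hgt), if_pos hgt]
    have h2 : max (⨆ i, (v i).1) (⨆ i, (w i).1) = ⨆ i, (v i).1 := max_eq_left hgt.le
    refine Prod.ext (by simp only []; rw [hsup, h2]) ?_
    simp only []
    rw [hsup, h2, hsum]
    have : (∑ i, if (w i).1 = ⨆ i, (v i).1 then (w i).2 else 0) = 0 := by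
      apply Finset.sum_eq_zero; intro i _
      rw [if_neg]
      intro hc
      exact absurd (lt_of_le_of_lt (hc ▸ le_fin_sup (fun i => (w i).1) i) hgt) (lt_irrefl _)
    rw [this, add_zero]

lemma hSum_mono {a b : ℕ → Hv} (h : ∀ m, hle (a m) (b m))
    (hb : BddAbove (Set.range fun m => (b m).1)) : hle (hSum a) (hSum b) := by
  have h1 : ∀ m, (a m).1 ≤ (b m).1 := fun m => hle_fst (h m)
  have hda : (⨆ m, (a m).1) ≤ ⨆ m, (b m).1 :=
    ciSup_le fun m => (h1 m).trans (le_ciSup hb m)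
  rcases eq_or_lt_of_le hda with heq | hlt'
  · refine Or.inr ⟨heq, ?_⟩
    apply ENNReal.tsum_le_tsum
    intro m
    by_cases hm : (a m).1 = ⨆ j, (a j).1
    · have hbm : (b m).1 = ⨆ j, (b j).1 := by
        refine le_antisymm (le_ciSup hb m) ?_
        calc (⨆ j, (b j).1) = ⨆ j, (a j).1 := heq.symm
          _ = (a m).1 := hm.symm
          _ ≤ (b m).1 := h1 m
      rw [if_pos hm, if_pos hbm]
      apply hle_snd (h m)
      rw [hm, hbm, heq]
    · rw [if_neg hm]; exact zero_le
  · exact Or.inl hlt'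

section auxlemmas3
open Set

lemma hFinsum_snd {n : ℕ} (v : Fin n → Hv) :
    (hFinsum v).2 = ∑ i, if (v i).1 = ⨆ j, (v j).1 then (v i).2 else 0 := rfl
lemma hSum_snd (a : ℕ → Hv) :
    (hSum a).2 = ∑' i, if (a i).1 = ⨆ j, (a j).1 then (a i).2 else 0 := rfl

lemma add_csup_le {f : ℕ → ℝ≥0} {a c : ℝ≥0} (h : ∀ m, a + f m ≤ c) : a + ⨆ m, f m ≤ c := by
  have ha : a ≤ c := le_trans (le_add_right le_rfl) (h 0)
  have h2 : (⨆ m, f m) ≤ c - a := ciSup_le fun m => le_tsub_of_add_le_left (h m)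
  calc a + ⨆ m, f m ≤ a + (c - a) := add_le_add_right h2 a
    _ = c := add_tsub_cancel_of_le ha

lemma hK3 {n : ℕ} (e : Fin n → Hv) (w : Fin n → ℕ → Hv)
    (hw : ∀ i, BddAbove (Set.range fun m => (w i m).1)) :
    hle (hFinsum fun i => hmul (e i) (hSum (w i)))
      (hSum fun m => hFinsum fun i => hmul (e i) (w i m)) := by
  rcases isEmpty_or_nonempty (Fin n) with he | hne
  · rw [hFinsum_zero_s17 (fun i => he.elim i)]; exact hle_zero _
  have htfst : ∀ i, e i ≠ (0,0) → hSum (w i) ≠ (0,0) →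
      (hmul (e i) (hSum (w i))).1 = (e i).1 + ⨆ m, (w i m).1 := by
    intro i hei hWi; rw [hmul_pos hei hWi]; rfl
  have hgfst : ∀ i m, e i ≠ (0,0) → w i m ≠ (0,0) →
      (hmul (e i) (w i m)).1 = (e i).1 + (w i m).1 := by
    intro i m hei hwm; rw [hmul_pos hei hwm]
  have F1 : ∀ i m, (hmul (e i) (w i m)).1 ≤ (hmul (e i) (hSum (w i))).1 := by
    intro i m
    by_cases hei : e i = (0,0)
    · rw [hei, hmul_zero_left]; exact zero_le
    by_cases hwm : w i m = (0,0)
    · rw [hwm, hmul_zero_right]; exact zero_le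
    rw [hgfst i m hei hwm, htfst i hei (hSum_ne_zero (hw i) hwm)]
    exact add_le_add_right (le_ciSup (hw i) m) _
  have F2 : ∀ m, (hFinsum fun i => hmul (e i) (w i m)).1
      ≤ ⨆ i, (hmul (e i) (hSum (w i))).1 := by
    intro m
    rw [hFinsum_fst]
    exact ciSup_le fun i => (F1 i m).trans (le_fin_sup (fun j => (hmul (e j) (hSum (w j))).1) i)
  have hbσ : BddAbove (Set.range fun m => (hFinsum fun i => hmul (e i) (w i m)).1) := by
    refine ⟨⨆ i, (hmul (e i) (hSum (w i))).1, ?_⟩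
    rintro y ⟨m, rfl⟩; exact F2 m
  have F3 : ∀ i, (hmul (e i) (hSum (w i))).1
      ≤ ⨆ m, (hFinsum fun i => hmul (e i) (w i m)).1 := by
    intro i
    by_cases hei : e i = (0,0)
    · rw [hei, hmul_zero_left]; exact zero_le
    by_cases hWi : hSum (w i) = (0,0)
    · rw [hWi, hmul_zero_right]; exact zero_le
    have hm0 : ∃ m, w i m ≠ (0,0) := by
      by_contra hall; push_neg at hall; exact hWi (hSum_zero_s17 hall)
    obtain ⟨m0, hm0⟩ := hm0
    rw [htfst i hei hWi]
    apply add_csup_le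
    intro m
    by_cases hwm : w i m = (0,0)
    · rw [hwm]
      calc (e i).1 + ((0,0) : Hv).1 = (e i).1 := add_zero _
        _ ≤ (e i).1 + (w i m0).1 := le_add_right le_rfl
        _ = (hmul (e i) (w i m0)).1 := (hgfst i m0 hei hm0).symm
        _ ≤ (hFinsum fun j => hmul (e j) (w j m0)).1 := by
            rw [hFinsum_fst]; exact le_fin_sup (fun j => (hmul (e j) (w j m0)).1) i
        _ ≤ _ := le_ciSup hbσ m0
    · calc (e i).1 + (w i m).1 = (hmul (e i) (w i m)).1 := (hgfst i m hei hwm).symm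
        _ ≤ (hFinsum fun j => hmul (e j) (w j m)).1 := by
            rw [hFinsum_fst]; exact le_fin_sup (fun j => (hmul (e j) (w j m)).1) i
        _ ≤ _ := le_ciSup hbσ m
  have F4 : (⨆ i, (hmul (e i) (hSum (w i))).1)
      = ⨆ m, (hFinsum fun i => hmul (e i) (w i m)).1 :=
    le_antisymm (ciSup_le F3) (ciSup_le fun m => (F2 m))
  refine Or.inr ⟨F4, ?_⟩
  -- second coordinates
  rw [hFinsum_snd, hSum_snd]
  set h' : Fin n → ℕ → ℝ≥0∞ := fun i m =>
    if ((hmul (e i) (hSum (w i))).1 = ⨆ j, (hmul (e j) (hSum (w j))).1)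
        ∧ (w i m).1 = (⨆ k, (w i k).1) ∧ w i m ≠ (0,0) ∧ e i ≠ (0,0)
      then (e i).2 * (w i m).2 else 0 with hh'
  have claimA : ∀ i, (if (hmul (e i) (hSum (w i))).1 = ⨆ j, (hmul (e j) (hSum (w j))).1
      then (hmul (e i) (hSum (w i))).2 else 0) = ∑' m, h' i m := by
    intro i
    by_cases hT : (hmul (e i) (hSum (w i))).1 = ⨆ j, (hmul (e j) (hSum (w j))).1
    · rw [if_pos hT]
      by_cases hei : e i = (0,0)
      · have hz : ∀ m, h' i m = 0 := fun m => if_neg (fun hc => hc.2.2.2 hei)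
        rw [tsum_congr hz, tsum_zero, hei, hmul_zero_left]
      by_cases hWi : hSum (w i) = (0,0)
      · have hz : ∀ m, h' i m = 0 := fun m =>
          if_neg (fun hc => hSum_ne_zero (hw i) hc.2.2.1 hWi)
        rw [tsum_congr hz, tsum_zero, hWi, hmul_zero_right]
      · rw [hmul_pos hei hWi]
        have h2 : (hSum (w i)).2 = ∑' m, (if (w i m).1 = ⨆ k, (w i k).1 then (w i m).2 else 0) :=
          rfl
        show (e i).2 * (hSum (w i)).2 = _
        rw [h2, ← ENNReal.tsum_mul_left]
        apply tsum_congr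
        intro m
        by_cases hc1 : (w i m).1 = ⨆ k, (w i k).1
        · by_cases hwm : w i m = (0,0)
          · rw [if_pos hc1, hh']
            simp only
            rw [if_neg (fun hc => hc.2.2.1 hwm), hwm]
            exact mul_zero _
          · rw [if_pos hc1, hh']
            simp only
            rw [if_pos ⟨hT, hc1, hwm, hei⟩]
        · rw [if_neg hc1, mul_zero, hh']
          simp only
          rw [if_neg (fun hc => hc1 hc.2.1)]
    · rw [if_neg hT]
      have hz : ∀ m, h' i m = 0 := fun m => if_neg (fun hc => hT hc.1)
      rw [tsum_congr hz, tsum_zero]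
  have key : ∀ m i, h' i m ≠ 0 →
      ((hmul (e i) (w i m)).1 = ⨆ j, (hmul (e j) (w j m)).1)
      ∧ ((hFinsum fun j => hmul (e j) (w j m)).1 = ⨆ k, (hFinsum fun j => hmul (e j) (w j k)).1)
      ∧ h' i m = (hmul (e i) (w i m)).2 := by
    intro m i h0
    rw [hh'] at h0
    simp only at h0
    by_cases hc : ((hmul (e i) (hSum (w i))).1 = ⨆ j, (hmul (e j) (hSum (w j))).1)
        ∧ (w i m).1 = (⨆ k, (w i k).1) ∧ w i m ≠ (0,0) ∧ e i ≠ (0,0)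
    swap
    · exact absurd (if_neg hc) h0
    obtain ⟨hT, hP, hwm, hei⟩ := hc
    have hWi : hSum (w i) ≠ (0,0) := hSum_ne_zero (hw i) hwm
    have hg1 : (hmul (e i) (w i m)).1 = (hmul (e i) (hSum (w i))).1 := by
      rw [hgfst i m hei hwm, htfst i hei hWi, hP]
    have hgT : (hmul (e i) (w i m)).1 = ⨆ k, (hFinsum fun j => hmul (e j) (w j k)).1 := by
      rw [hg1, hT, F4]
    have hσm : (hFinsum fun j => hmul (e j) (w j m)).1
        = ⨆ k, (hFinsum fun j => hmul (e j) (w j k)).1 := by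
      refine le_antisymm (le_ciSup hbσ m) ?_
      rw [← hgT, hFinsum_fst]
      exact le_fin_sup (fun j => (hmul (e j) (w j m)).1) i
    refine ⟨?_, hσm, ?_⟩
    · rw [← hFinsum_fst, hσm, ← hgT]
    · rw [hh']; simp only
      rw [if_pos ⟨hT, hP, hwm, hei⟩, hmul_pos hei hwm]
  have claimC : ∀ m, (∑ i, h' i m)
      ≤ (if (hFinsum fun i => hmul (e i) (w i m)).1
          = ⨆ j, (hFinsum fun i => hmul (e i) (w i j)).1
        then (hFinsum fun i => hmul (e i) (w i m)).2 else 0) := by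
    intro m
    by_cases hσ : (hFinsum fun i => hmul (e i) (w i m)).1
        = ⨆ j, (hFinsum fun i => hmul (e i) (w i j)).1
    · rw [if_pos hσ, hFinsum_snd]
      apply Finset.sum_le_sum
      intro i _
      by_cases h0 : h' i m = 0
      · rw [h0]; exact zero_le
      · obtain ⟨k1, _, k3⟩ := key m i h0
        rw [hFinsum_fst] at *
        rw [if_pos k1, k3]
    · rw [if_neg hσ]
      have hz : ∀ i ∈ Finset.univ, h' i m = 0 := by
        intro i _
        by_contra h0
        exact hσ (key m i h0).2.1
      rw [Finset.sum_eq_zero hz]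
  calc (∑ i, if (hmul (e i) (hSum (w i))).1 = ⨆ j, (hmul (e j) (hSum (w j))).1
        then (hmul (e i) (hSum (w i))).2 else 0)
      = ∑ i, ∑' m, h' i m := Finset.sum_congr rfl (fun i _ => claimA i)
    _ = ∑' m, ∑ i, h' i m := (Summable.tsum_finsetSum (fun i _ => ENNReal.summable)).symm
    _ ≤ _ := ENNReal.tsum_le_tsum claimC
end auxlemmas3

section auxlemmas4
open Set
variable {K : Type*} [MeasurableSpace K]

lemma hlub_exists_gt {s : Set Hv} {v u : Hv} (h : IsHLub s v) (hu : hlt u v) :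
    ∃ x ∈ s, hlt u x := by
  by_contra h'
  push_neg at h'
  have hub : ∀ x ∈ s, hle x u := fun x hx => by
    by_contra hxu
    exact h' x hx (hlt_of_not_hle hxu)
  exact not_hle_of_hlt hu (h.2 u hub)

lemma hIntSet_mono (μ : Set K → Hv) (f : K → Fv) {L M : Set K} (h : L ⊆ M) :
    hIntSet μ (fun x => if x ∈ L then f x else (0,0))
    ⊆ hIntSet μ (fun x => if x ∈ M then f x else (0,0)) := by
  rintro v ⟨n, c, B, hB, hd, hc, rfl⟩
  refine ⟨n, c, B, hB, hd, fun i x hx => ?_, rfl⟩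
  have hcx : fle (c i) (if x ∈ L then f x else ((0,0) : Fv)) := hc i x hx
  show fle (c i) (if x ∈ M then f x else ((0,0) : Fv))
  by_cases hxL : x ∈ L
  · rw [if_pos hxL] at hcx
    rw [if_pos (h hxL)]
    exact hcx
  · rw [if_neg hxL] at hcx
    rw [fle_zero hcx]
    exact fle_zero_left _

lemma hIntSet_restrict (μ : Set K → Hv) (f : K → Fv) {L : Set K} (hL : MeasurableSet L)
    {v : Hv} (hv : v ∈ hIntSet μ (fun x => if x ∈ L then f x else (0,0))) :
    ∃ (n : ℕ) (c : Fin n → Fv) (B : Fin n → Set K),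
      (∀ i, MeasurableSet (B i)) ∧ Pairwise (Function.onFun Disjoint B) ∧
      (∀ i, B i ⊆ L) ∧ (∀ i, ∀ x ∈ B i, fle (c i) (f x)) ∧
      v = hFinsum fun i => hmul (emb (c i)) (μ (B i)) := by
  obtain ⟨n, c, B, hB, hd, hc, rfl⟩ := hv
  refine ⟨n, c, fun i => B i ∩ L, fun i => (hB i).inter hL,
    fun i j hij => (hd hij).mono inter_subset_left inter_subset_left,
    fun i => inter_subset_right, ?_, ?_⟩
  · intro i x hx
    have hcx : fle (c i) (if x ∈ L then f x else ((0,0) : Fv)) := hc i x hx.1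
    rwa [if_pos hx.2] at hcx
  · apply congrArg hFinsum
    funext i
    by_cases hci : c i = (0,0)
    · rw [hci, emb_zero, hmul_zero_left, hmul_zero_left]
    · show hmul (emb (c i)) (μ (B i)) = hmul (emb (c i)) (μ (B i ∩ L))
      have hBL : B i ⊆ L := by
        intro x hx
        by_contra hxL
        have hcx : fle (c i) (if x ∈ L then f x else ((0,0) : Fv)) := hc i x hx
        rw [if_neg hxL] at hcx
        exact hci (fle_zero hcx)
      rw [inter_eq_left.mpr hBL]

lemma hIntSet_combine (μ : Set K → Hv) (f : K → Fv) {L M N : Set K}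
    (hL : MeasurableSet L) (hM : MeasurableSet M) (hLM : Disjoint L M) (hN : N = L ∪ M)
    {v w : Hv}
    (hv : v ∈ hIntSet μ (fun x => if x ∈ L then f x else (0,0)))
    (hw : w ∈ hIntSet μ (fun x => if x ∈ M then f x else (0,0))) :
    hadd v w ∈ hIntSet μ (fun x => if x ∈ N then f x else (0,0)) := by
  subst hN
  obtain ⟨n1, c1, B1, hB1, hd1, hsub1, hc1, rfl⟩ := hIntSet_restrict μ f hL hv
  obtain ⟨n2, c2, B2, hB2, hd2, hsub2, hc2, rfl⟩ := hIntSet_restrict μ f hM hw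
  rw [← hFinsum_append]
  have hfun : (Fin.append (fun i => hmul (emb (c1 i)) (μ (B1 i)))
      (fun i => hmul (emb (c2 i)) (μ (B2 i))))
      = fun i => hmul (emb (Fin.append c1 c2 i)) (μ (Fin.append B1 B2 i)) := by
    funext i
    induction i using Fin.addCases with
    | left j => simp only [Fin.append_left]
    | right j => simp only [Fin.append_right]
  rw [hfun]
  refine ⟨n1 + n2, Fin.append c1 c2, Fin.append B1 B2, ?_, ?_, ?_, rfl⟩
  · intro i
    induction i using Fin.addCases with
    | left j => simpa only [Fin.append_left] using hB1 j
    | right j => simpa only [Fin.append_right] using hB2 j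
  · intro i j hij
    unfold Function.onFun
    induction i using Fin.addCases with
    | left i' =>
      induction j using Fin.addCases with
      | left j' =>
        simp only [Fin.append_left]
        exact hd1 (fun hc => hij (by rw [hc]))
      | right j' =>
        simp only [Fin.append_left, Fin.append_right]
        exact hLM.mono (hsub1 i') (hsub2 j')
    | right i' =>
      induction j using Fin.addCases with
      | left j' =>
        simp only [Fin.append_left, Fin.append_right]
        exact (hLM.mono (hsub1 j') (hsub2 i')).symm
      | right j' =>
        simp only [Fin.append_right]
        exact hd2 (fun hc => hij (by rw [hc]))
  · intro i x hx
    induction i using Fin.addCases with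
    | left j =>
      rw [Fin.append_left] at hx
      simp only [Fin.append_left]
      rw [if_pos (Set.mem_union_left M (hsub1 j hx))]
      exact hc1 j x hx
    | right j =>
      rw [Fin.append_right] at hx
      simp only [Fin.append_right]
      rw [if_pos (Set.mem_union_right L (hsub2 j hx))]
      exact hc2 j x hx

lemma mu_fst_mono {μ : Set K → Hv} (hμ : IsHMeasure μ) {C X : Set K}
    (hC : MeasurableSet C) (hX : MeasurableSet X) (hCX : C ⊆ X) :
    (μ C).1 ≤ (μ X).1 := by
  classical
  set A' : ℕ → Set K := fun k => if k = 0 then C else if k = 1 then X \ C else ∅ with hA'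
  have hmeas : ∀ k, MeasurableSet (A' k) := by
    intro k
    rw [hA']
    by_cases h0 : k = 0
    · simpa [h0] using hC
    by_cases h1 : k = 1
    · simp only [h0, h1, if_false, if_true]
      exact hX.diff hC
    · simp [h0, h1]
  have hdisj : Pairwise (Function.onFun Disjoint A') := by
    intro i j hij
    unfold Function.onFun
    rw [hA']
    by_cases hi0 : i = 0 <;> by_cases hj0 : j = 0 <;>
      by_cases hi1 : i = 1 <;> by_cases hj1 : j = 1 <;>
      simp_all [disjoint_sdiff_self_right, disjoint_sdiff_self_left]
  have hunion : (⋃ k, A' k) = X := by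
    apply Set.eq_of_subset_of_subset
    · intro x hx
      obtain ⟨k, hk⟩ := mem_iUnion.mp hx
      replace hk : x ∈ (if k = 0 then C else if k = 1 then X \ C else ∅) := hk
      by_cases h0 : k = 0
      · rw [if_pos h0] at hk; exact hCX hk
      by_cases h1 : k = 1
      · rw [if_neg h0, if_pos h1] at hk; exact hk.1
      · rw [if_neg h0, if_neg h1] at hk; exact absurd hk (notMem_empty x)
    · intro x hx
      by_cases hxC : x ∈ C
      · exact mem_iUnion.mpr ⟨0, by simp [hA', hxC]⟩
      · exact mem_iUnion.mpr ⟨1, by simp [hA', hx, hxC]⟩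
  have heq := hμ.2 A' hmeas hdisj
  rw [hunion] at heq
  have hbdd : BddAbove (Set.range fun k => (μ (A' k)).1) := by
    refine ⟨max (μ C).1 (max (μ (X \ C)).1 (μ ∅).1), ?_⟩
    rintro y ⟨k, rfl⟩
    rw [hA']
    by_cases h0 : k = 0
    · simp only [h0, if_true]; exact le_max_left _ _
    by_cases h1 : k = 1
    · simp only [h0, h1, if_false, if_true]
      exact le_max_of_le_right (le_max_left _ _)
    · simp only [h0, h1, if_false]
      exact le_max_of_le_right (le_max_right _ _)
  calc (μ C).1 = (μ (A' 0)).1 := by rw [hA']; simp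
    _ ≤ ⨆ k, (μ (A' k)).1 := le_ciSup hbdd 0
    _ = (μ X).1 := by rw [heq, hSum_fst]
end auxlemmas4

section auxlemmas5
open Set
variable {K : Type*} [MeasurableSpace K]

lemma hIntSet_finsetSum (μ : Set K → Hv) (f : K → Fv) (A : ℕ → Set K)
    (hA : ∀ n, MeasurableSet (A n)) (hdisj : Pairwise (Function.onFun Disjoint A))
    {F : Finset ℕ} (hF : F.Nonempty) (x : ℕ → Hv) (D : ℝ≥0)
    (hx : ∀ n ∈ F, x n ∈ hIntSet μ (fun y => if y ∈ A n then f y else (0,0)) ∧ (x n).1 = D) :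
    ((D, ∑ n ∈ F, (x n).2) : Hv) ∈
      hIntSet μ (fun y => if y ∈ ⋃ n ∈ F, A n then f y else (0,0)) := by
  refine Finset.Nonempty.cons_induction
    (motive := fun F _ => (∀ n ∈ F, x n ∈ hIntSet μ (fun y => if y ∈ A n then f y else (0,0))
        ∧ (x n).1 = D) →
      ((D, ∑ n ∈ F, (x n).2) : Hv) ∈
        hIntSet μ (fun y => if y ∈ ⋃ n ∈ F, A n then f y else (0,0)))
    ?_ ?_ hF hx
  · intro a hxa
    obtain ⟨hmem, hfst⟩ := hxa a (Finset.mem_singleton_self a)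
    have hval : ((D, ∑ n ∈ ({a} : Finset ℕ), (x n).2) : Hv) = x a := by
      rw [Finset.sum_singleton]
      exact Prod.ext hfst.symm rfl
    have hset : (⋃ n ∈ ({a} : Finset ℕ), A n) = A a := by simp
    rw [hval, hset]
    exact hmem
  · intro a s ha hs ih hxa
    have hmem := hxa a (Finset.mem_cons_self a s)
    have hih := ih (fun n hn => hxa n (Finset.mem_cons.mpr (Or.inr hn)))
    have hMmeas : MeasurableSet (⋃ n ∈ s, A n) :=
      MeasurableSet.biUnion s.countable_toSet (fun b _ => hA b)
    have hdisjaM : Disjoint (A a) (⋃ n ∈ s, A n) := by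
      simp only [Set.disjoint_iUnion_right]
      intro n hn
      exact hdisj (fun h => ha (h ▸ hn))
    have hset : (⋃ n ∈ Finset.cons a s ha, A n) = A a ∪ ⋃ n ∈ s, A n := by
      rw [Finset.cons_eq_insert, Finset.set_biUnion_insert]
    have hcomb := hIntSet_combine μ f (hA a) hMmeas hdisjaM hset hmem.1 hih
    have hval : hadd (x a) ((D, ∑ n ∈ s, (x n).2) : Hv)
        = ((D, ∑ n ∈ Finset.cons a s ha, (x n).2) : Hv) := by
      simp [hadd, hmem.2, lt_self_iff_false, Finset.sum_cons, Finset.sum_insert ha]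
    rw [← hval]
    exact hcomb

end auxlemmas5

/-- `ν(L) = (H)∫_L f dμ` defines an h-measure on `S`. -/
theorem hint_is_hmeasure {K : Type*} [MeasurableSpace K] (μ : Set K → Hv)
    (hμ : IsHMeasure μ) (f : K → Fv) (hf : HMeas f) (ν : Set K → Hv)
    (hν : ∀ L, MeasurableSet L →
      IsHLub (hIntSet μ fun x => if x ∈ L then f x else (0, 0)) (ν L)) :
    ν ∅ = (0, 0) ∧
    ∀ A : ℕ → Set K, (∀ n, MeasurableSet (A n)) → Pairwise (Function.onFun Disjoint A) →
      ν (⋃ n, A n) = hSum fun n => ν (A n) := by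
  constructor
  · have lub := hν ∅ MeasurableSet.empty
    refine hle_antisymm ?_ (hle_zero _)
    apply lub.2
    rintro w ⟨n, c, B, hB, hd, hc, rfl⟩
    have hz : ∀ i, hmul (emb (c i)) (μ (B i)) = (0,0) := by
      intro i
      rcases Set.eq_empty_or_nonempty (B i) with hBe | ⟨x, hx⟩
      · rw [hBe, hμ.1, hmul_zero_right]
      · have hcx := hc i x hx
        simp only [Set.mem_empty_iff_false, if_false] at hcx
        rw [fle_zero hcx, emb_zero, hmul_zero_left]
    rw [hFinsum_zero_s17 hz]
    exact hle_refl _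
  · intro A hA hdisj
    have hUm : MeasurableSet (⋃ n, A n) := MeasurableSet.iUnion hA
    have lubU := hν _ hUm
    have νmono : ∀ (L M : Set K), MeasurableSet L → MeasurableSet M → L ⊆ M →
        hle (ν L) (ν M) := by
      intro L M hL hM hsub
      exact (hν L hL).2 (ν M) (fun w hw => (hν M hM).1 w (hIntSet_mono μ f hsub hw))
    have hble : ∀ n, hle (ν (A n)) (ν (⋃ m, A m)) :=
      fun n => νmono _ _ (hA n) hUm (Set.subset_iUnion A n)
    have hbD : BddAbove (Set.range fun n => (ν (A n)).1) :=
      ⟨(ν (⋃ m, A m)).1, by rintro y ⟨n, rfl⟩; exact hle_fst (hble n)⟩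
    apply hle_antisymm
    · -- ≤
      apply lubU.2
      intro w hw
      obtain ⟨n, c, B, hBm, hd, hsub, hc, hweq⟩ := hIntSet_restrict μ f hUm hw
      subst hweq
      have hμB : ∀ i, μ (B i) = hSum (fun m => μ (B i ∩ A m)) := by
        intro i
        have hBeq : B i = ⋃ m, (B i ∩ A m) := by
          rw [← Set.inter_iUnion]
          exact (Set.inter_eq_left.mpr (hsub i)).symm
        calc μ (B i) = μ (⋃ m, B i ∩ A m) := by rw [← hBeq]
          _ = hSum fun m => μ (B i ∩ A m) :=
            hμ.2 _ (fun m => (hBm i).inter (hA m))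
              (fun m k hmk => (hdisj hmk).mono Set.inter_subset_right Set.inter_subset_right)
      have hbdd : ∀ i, BddAbove (Set.range fun m => (μ (B i ∩ A m)).1) := by
        intro i
        exact ⟨(μ (B i)).1, by
          rintro y ⟨m, rfl⟩
          exact mu_fst_mono hμ ((hBm i).inter (hA m)) (hBm i) Set.inter_subset_left⟩
      have hrw : (fun i => hmul (emb (c i)) (μ (B i)))
          = fun i => hmul (emb (c i)) (hSum fun m => μ (B i ∩ A m)) := by
        funext i; rw [hμB i]
      rw [hrw]
      refine hle_trans (hK3 (fun i => emb (c i)) (fun i m => μ (B i ∩ A m)) hbdd) ?_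
      refine hSum_mono ?_ hbD
      intro m
      apply (hν (A m) (hA m)).1
      refine ⟨n, c, fun i => B i ∩ A m, fun i => (hBm i).inter (hA m),
        fun i j hij => (hd hij).mono Set.inter_subset_left Set.inter_subset_left, ?_, rfl⟩
      intro i x hx
      show fle (c i) (if x ∈ A m then f x else ((0,0) : Fv))
      rw [if_pos hx.2]
      exact hc i x hx.1
    · -- ≥
      have hDle : (⨆ n, (ν (A n)).1) ≤ (ν (⋃ n, A n)).1 := ciSup_le fun n => hle_fst (hble n)
      rcases eq_or_lt_of_le hDle with hD | hD
      swap
      · exact Or.inl hD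
      refine Or.inr ⟨hD, ?_⟩
      rw [hSum_snd, ENNReal.tsum_eq_iSup_sum]
      apply iSup_le
      intro F
      set D := ⨆ n, (ν (A n)).1 with hDdef
      set F' := F.filter (fun n => (ν (A n)).1 = D ∧ (ν (A n)).2 ≠ 0) with hF'
      have h1 : (∑ n ∈ F, if (ν (A n)).1 = D then (ν (A n)).2 else 0)
          = ∑ n ∈ F.filter (fun n => (ν (A n)).1 = D), (ν (A n)).2 :=
        (Finset.sum_filter _ _).symm
      have h2 : (∑ n ∈ F.filter (fun n => (ν (A n)).1 = D), (ν (A n)).2)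
          = ∑ n ∈ F', (ν (A n)).2 := by
        rw [hF', ← Finset.filter_filter, Finset.sum_filter_ne_zero]
      have hFP : ∀ n ∈ F', (ν (A n)).1 = D ∧ (ν (A n)).2 ≠ 0 :=
        fun n hn => (Finset.mem_filter.mp hn).2
      rw [h1, h2]
      rcases F'.eq_empty_or_nonempty with hFe | hFne
      · rw [hFe, Finset.sum_empty]; exact zero_le
      by_cases htop : ∃ n ∈ F', (ν (A n)).2 = ⊤
      · obtain ⟨n0, hn0F, hn0⟩ := htop
        have hu2 : (ν (⋃ m, A m)).2 = ⊤ := by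
          by_contra hne
          have hlt0 : hlt ((D, (ν (⋃ m, A m)).2) : Hv) (ν (A n0)) :=
            Or.inr ⟨(hFP n0 hn0F).1.symm, by rw [hn0]; exact lt_top_iff_ne_top.mpr hne⟩
          obtain ⟨xx, hxxmem, hxxlt⟩ := hlub_exists_gt (hν (A n0) (hA n0)) hlt0
          have hxxle := lubU.1 xx (hIntSet_mono μ f (Set.subset_iUnion A n0) hxxmem)
          have hx1 : xx.1 ≤ (ν (⋃ n, A n)).1 := hle_fst hxxle
          rw [← hD] at hx1
          rcases hxxlt with hlt1 | ⟨heq1, hlt2⟩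
          · exact absurd (lt_of_lt_of_le hlt1 hx1) (lt_irrefl _)
          · have hle2 : xx.2 ≤ (ν (⋃ n, A n)).2 := hle_snd hxxle (heq1.symm.trans hD)
            exact absurd (lt_of_lt_of_le hlt2 hle2) (lt_irrefl _)
        rw [hu2]; exact le_top
      · push_neg at htop
        apply ENNReal.le_of_forall_pos_le_add
        intro ε hε _
        have hk0 : (F'.card : ℝ≥0∞) ≠ 0 := by
          exact_mod_cast Finset.card_ne_zero.mpr hFne
        have hktop : (F'.card : ℝ≥0∞) ≠ ⊤ := ENNReal.natCast_ne_top _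
        set ε' : ℝ≥0∞ := (ε : ℝ≥0∞) / F'.card with hε'def
        have hε'0 : ε' ≠ 0 := by
          rw [hε'def]
          exact ENNReal.div_ne_zero.mpr ⟨by exact_mod_cast hε.ne', hktop⟩
        have happrox : ∀ n, ∃ xx : Hv, n ∈ F' →
            (xx ∈ hIntSet μ (fun y => if y ∈ A n then f y else (0,0))
              ∧ xx.1 = D ∧ (ν (A n)).2 - ε' < xx.2) := by
          intro n
          by_cases hn : n ∈ F'
          · have hP := hFP n hn
            have hlt0 : hlt ((D, (ν (A n)).2 - ε') : Hv) (ν (A n)) :=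
              Or.inr ⟨hP.1.symm, ENNReal.sub_lt_self (htop n hn) hP.2 hε'0⟩
            obtain ⟨xx, hxxmem, hxxlt⟩ := hlub_exists_gt (hν (A n) (hA n)) hlt0
            have h1' : xx.1 ≤ (ν (A n)).1 := hle_fst ((hν (A n) (hA n)).1 xx hxxmem)
            refine ⟨xx, fun _ => ⟨hxxmem, ?_, ?_⟩⟩
            · rcases hxxlt with hlt1 | ⟨heq1, _⟩
              · exact absurd (lt_of_lt_of_le hlt1 (h1'.trans hP.1.le)) (lt_irrefl _)
              · exact heq1.symm
            · rcases hxxlt with hlt1 | ⟨_, hlt2⟩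
              · exact absurd (lt_of_lt_of_le hlt1 (h1'.trans hP.1.le)) (lt_irrefl _)
              · exact hlt2
          · exact ⟨(0,0), fun h => absurd h hn⟩
        choose xx hxx using happrox
        have hcomb := hIntSet_finsetSum μ f A hA hdisj hFne xx D
          (fun n hn => ⟨(hxx n hn).1, (hxx n hn).2.1⟩)
        have hsubU : (⋃ n ∈ F', A n) ⊆ ⋃ n, A n :=
          Set.iUnion₂_subset fun n _ => Set.subset_iUnion A n
        have hVle := lubU.1 _ (hIntSet_mono μ f hsubU hcomb)
        have hV2 : (∑ n ∈ F', (xx n).2) ≤ (ν (⋃ n, A n)).2 := hle_snd hVle hD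
        calc (∑ n ∈ F', (ν (A n)).2)
            ≤ ∑ n ∈ F', ((xx n).2 + ε') := by
              apply Finset.sum_le_sum
              intro n hn
              calc (ν (A n)).2 ≤ ((ν (A n)).2 - ε') + ε' := le_tsub_add
                _ ≤ (xx n).2 + ε' := add_le_add_left ((hxx n hn).2.2).le _
          _ = (∑ n ∈ F', (xx n).2) + F'.card * ε' := by
              rw [Finset.sum_add_distrib, Finset.sum_const, nsmul_eq_mul]
          _ ≤ (ν (⋃ n, A n)).2 + F'.card * ε' := add_le_add_left hV2 _
          _ ≤ (ν (⋃ n, A n)).2 + ε := by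
              apply add_le_add_right
              rw [hε'def, mul_comm]
              exact le_of_eq (ENNReal.div_mul_cancel hk0 hktop)
end auxlemmas2
end
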